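/- For n ≥ 3, the subgroup E_n is not normal in Aut(T_n). Specifically, with ν_n ∈ Aut(T_n) defined recursively by ν_1 = (12) and ν_n = ((ν_{n-1},1,1),1), and a = ((1,1,1),(123)) ∈ E_n, the conjugate ν_n a ν_n^{-1} = ((ν_{n-1},1,ν_{n-1}),(123)) does not lie in E_n. -/

import Mathlib

open Equiv

/-- Leaves of the regular ternary rooted tree of height `n`. -/
def L : ℕ → Type
  | 0 => PUnit
  | n+1 => Fin 3 × L n

instance Ldec : ∀ n, DecidableEq (L n)
  | 0 => inferInstanceAs (DecidableEq PUnit)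
  | n+1 => letI := Ldec n; inferInstanceAs (DecidableEq (Fin 3 × L n))

instance Lfin : ∀ n, Fintype (L n)
  | 0 => inferInstanceAs (Fintype PUnit)
  | n+1 => letI := Lfin n; inferInstanceAs (Fintype (Fin 3 × L n))

/-- The wreath-product construction `G ≀ S_3` (as a type). -/
def W (G : Type) : Type := (Fin 3 → G) × Equiv.Perm (Fin 3)

instance Wgroup (G : Type) [Group G] : Group (W G) where
  mul x y := (fun i => x.1 (y.2 i) * y.1 i, x.2 * y.2)
  one := (fun _ => 1, 1)
  inv x := (fun i => (x.1 (x.2⁻¹ i))⁻¹, x.2⁻¹)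
  mul_assoc x y z := Prod.ext (funext fun i => mul_assoc _ _ _) (mul_assoc _ _ _)
  one_mul x := Prod.ext (funext fun i => one_mul _) (one_mul _)
  mul_one x := Prod.ext (funext fun i => mul_one _) (mul_one _)
  inv_mul_cancel x := Prod.ext (funext fun i => by
      show (x.1 (x.2⁻¹ (x.2 i)))⁻¹ * x.1 i = 1
      rw [Equiv.Perm.inv_def, Equiv.symm_apply_apply, inv_mul_cancel]) (inv_mul_cancel _)

/-- `A n` is the automorphism group of the ternary rooted tree of height `n`,
realized as the `n`-fold iterated wreath product of `S_3 = Aut(T_1)`. -/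
def A : ℕ → Type
  | 0 => PUnit
  | n+1 => W (A n)

instance Agroup : ∀ n, Group (A n)
  | 0 => inferInstanceAs (Group PUnit)
  | n+1 => @Wgroup (A n) (Agroup n)

/-- The faithful action of `A n` on the `3^n` leaves of the tree. -/
def toPerm : ∀ n, A n →* Equiv.Perm (L n)
  | 0 => 1
  | n+1 =>
    { toFun := fun x : W (A n) => Equiv.prodShear x.2 (fun i => toPerm n (x.1 i))
      map_one' := by
        apply Equiv.ext
        intro l
        show ((1 : Equiv.Perm (Fin 3)) l.1, toPerm n (1 : A n) l.2) = l
        rw [map_one]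
        exact Prod.ext rfl rfl
      map_mul' := by
        intro x y
        apply Equiv.ext
        intro l
        show ((x * y).2 l.1, toPerm n ((x * y).1 l.1) l.2)
          = (x.2 (y.2 l.1), toPerm n (x.1 (y.2 l.1)) ((toPerm n (y.1 l.1)) l.2))
        refine Prod.ext rfl ?_
        show toPerm n (x.1 (y.2 l.1) * y.1 l.1) l.2 = _
        rw [map_mul]
        rfl }

/-- Restriction `Aut(T_{n+1}) → Aut(T_n)` to the subtree spanned by the first `n` levels. -/
def res : ∀ n, A (n+1) →* A n
  | 0 => 1
  | n+1 =>
    { toFun := fun x : W (A (n+1)) => ((fun i => res n (x.1 i), x.2) : W (A n))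
      map_one' := Prod.ext (funext fun _ => map_one (res n)) rfl
      map_mul' := fun x y => Prod.ext (funext fun i => map_mul (res n) _ _) rfl }

/-- Restriction `Aut(T_{n+2}) → Aut(T_2)`. -/
def resTo2 : ∀ n, A (n+2) →* A 2
  | 0 => MonoidHom.id _
  | n+1 => (resTo2 n).comp (res (n+2))

/-- `sgn_2` : the sign of the permutation induced on the 9 leaves of `T_2`. -/
def sgn2 (n : ℕ) : A (n+2) →* ℤˣ :=
  Equiv.Perm.sign.comp ((toPerm 2).comp (resTo2 n))

/-- Given a subgroup `H ≤ Aut(T_n)`, the subgroup of `Aut(T_{n+1})` consisting of elements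
all of whose three level-1 components lie in `H` (the base of the wreath product `H ≀ S_3`). -/
def lift1 {n : ℕ} (Hn : Subgroup (A n)) : Subgroup (A (n+1)) where
  carrier := {x : W (A n) | ∀ i, x.1 i ∈ Hn}
  one_mem' := fun _ => Hn.one_mem
  mul_mem' := fun {x y} hx hy i => Hn.mul_mem (hx _) (hy _)
  inv_mem' := fun {x} hx i => Hn.inv_mem (hx _)

/-- The groups `E_n`: `E_1 = Aut(T_1)` and `E_n = (E_{n-1} ≀ Aut(T_1)) ∩ ker sgn_2`. -/
def E : ∀ n, Subgroup (A n)
  | 0 => ⊤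
  | 1 => ⊤
  | n+2 => lift1 (E (n+1)) ⊓ (sgn2 n).ker

/-- The projection onto the top (level-1) symmetric group component. -/
def sndHom (n : ℕ) : A (n+1) →* Equiv.Perm (Fin 3) where
  toFun := fun x : W (A n) => x.2
  map_one' := rfl
  map_mul' := fun _ _ => rfl

/-- The cyclic subgroup `C_3 ≤ S_3`. -/
def C3 : Subgroup (Equiv.Perm (Fin 3)) := Subgroup.zpowers (finRotate 3)

/-- The groups `H_n = [C_3]^n`, the iterated wreath product of cyclic groups of order 3. -/
def Hgp : ∀ n, Subgroup (A n)
  | 0 => ⊤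
  | n+1 => lift1 (Hgp n) ⊓ C3.comap (sndHom n)

/-- The elements `ν_n`: `ν_1 = (12)`, `ν_n = ((ν_{n-1},1,1),1)`. -/
def ν : ∀ n, A n
  | 0 => 1
  | 1 => ((fun _ => (1 : A 0), Equiv.swap 0 1) : W (A 0))
  | n+2 => ((fun i => if i = 0 then ν (n+1) else 1, 1) : W (A (n+1)))

/-- The elements `τ_n`: `τ_1 = (12)`, `τ_n = ((τ_{n-1},1,1),(12))`. -/
def τ : ∀ n, A n
  | 0 => 1
  | 1 => ((fun _ => (1 : A 0), Equiv.swap 0 1) : W (A 0))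
  | n+2 => ((fun i => if i = 0 then τ (n+1) else 1, Equiv.swap 0 1) : W (A (n+1)))

/-- Truncation of a leaf of `T_n` to the vertex at level `m` below it. -/
def take : ∀ (n m : ℕ), L n → L m
  | _, 0, _ => PUnit.unit
  | 0, m+1, _ => ((0, take 0 m PUnit.unit) : Fin 3 × L m)
  | n+1, m+1, l => ((l.1, take n m l.2) : Fin 3 × L m)

/-!
The rotation `a` of the three root subtrees has trivial components and acts on the nine
leaves of `T_2` as a product of three 3-cycles, so `a ∈ E_n`. Conjugating by `ν_n`, which is
an involution, plants `ν_(n-1)` into two of the components. But membership in `E_n` forces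
every component into `E_(n-1)`, and descending along the first subtree reduces `ν_m ∉ E_m`
to `ν_2`, which is a transposition of two leaves of `T_2` and hence odd.
-/

def rootPerm (n : ℕ) (σ : Perm (Fin 3)) : A (n+1) := ((fun _ => 1, σ) : W (A n))

lemma mem_E_succ_succ {k : ℕ} {x : A (k+2)} :
    x ∈ E (k+2) ↔ (∀ i, x.1 i ∈ E (k+1)) ∧ sgn2 k x = 1 :=
  Iff.rfl

lemma res_rootPerm (n : ℕ) (σ : Perm (Fin 3)) : res (n+1) (rootPerm (n+1) σ) = rootPerm n σ :=
  Prod.ext (funext fun _ => map_one (res n)) rfl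

lemma resTo2_rootPerm (σ : Perm (Fin 3)) : ∀ k, resTo2 k (rootPerm (k+1) σ) = rootPerm 1 σ
  | 0 => rfl
  | k+1 => (congrArg (resTo2 k) (res_rootPerm (k+1) σ)).trans (resTo2_rootPerm σ k)

lemma toPerm_rootPerm (n : ℕ) (σ : Perm (Fin 3)) :
    toPerm (n+1) (rootPerm n σ) = prodCongrLeft fun _ => σ :=
  Equiv.ext fun l => Prod.ext rfl (congrArg (· l.2) (map_one (toPerm n)))

lemma sgn2_rootPerm (k : ℕ) (σ : Perm (Fin 3)) : sgn2 k (rootPerm (k+1) σ) = Perm.sign σ := by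
  have hcard : Fintype.card (L 1) = 3 := rfl
  calc sgn2 k (rootPerm (k+1) σ) = Perm.sign σ ^ Fintype.card (L 1) := by
        rw [sgn2, MonoidHom.comp_apply, MonoidHom.comp_apply, resTo2_rootPerm, toPerm_rootPerm]
        exact (Perm.sign_prodCongrLeft fun _ : L 1 => σ).trans (Finset.prod_const _)
    _ = Perm.sign σ := by rw [hcard, pow_succ, Int.units_sq, one_mul]

lemma ν_mul_self : ∀ n, ν n * ν n = 1
  | 0 => rfl
  | 1 => Prod.ext (funext fun _ => rfl) (swap_mul_self 0 1)
  | n+2 => by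
    refine Prod.ext (funext fun i => ?_) (one_mul 1)
    show (if i = 0 then ν (n+1) else 1) * (if i = 0 then ν (n+1) else 1) = 1
    split_ifs
    exacts [ν_mul_self (n+1), one_mul 1]

lemma ν_inv (n : ℕ) : (ν n)⁻¹ = ν n := inv_eq_of_mul_eq_one_right (ν_mul_self n)

lemma ν_not_mem_E : ∀ k, ν (k+2) ∉ E (k+2)
  | 0 => fun h => absurd (mem_E_succ_succ.mp h).2 (by decide)
  | k+1 => fun h => ν_not_mem_E k ((mem_E_succ_succ.mp h).1 0)

lemma rootPerm_mem_E {k : ℕ} {σ : Perm (Fin 3)} (hσ : Perm.sign σ = 1) :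
    rootPerm (k+1) σ ∈ E (k+2) :=
  mem_E_succ_succ.mpr ⟨fun _ => (E (k+1)).one_mem, (sgn2_rootPerm k σ).trans hσ⟩

lemma ν_mul_rootPerm_finRotate_mul_ν_inv (n : ℕ) :
    ν (n+2) * rootPerm (n+1) (finRotate 3) * (ν (n+2))⁻¹
      = (((fun i => if i = 1 then 1 else ν (n+1), finRotate 3) : W (A (n+1))) : A (n+2)) := by
  rw [ν_inv]
  refine Prod.ext (funext fun i => ?_) (mul_one _)
  show ((if finRotate 3 i = 0 then ν (n+1) else 1) * 1) * (if i = 0 then ν (n+1) else 1) = _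
  fin_cases i <;> simp

/-- For `n = m+3 ≥ 3`, with `a = ((1,1,1),(123)) ∈ E_n`, the conjugate
`ν_n a ν_n⁻¹ = ((ν_{n-1},1,ν_{n-1}),(123))` does not lie in `E_n`; in particular `E_n` is
not normal in `Aut(T_n)`. -/
theorem E_not_normal (m : ℕ) :
    let a : A (m+3) := ((fun _ => 1, finRotate 3) : W (A (m+2)))
    a ∈ E (m+3) ∧
    ν (m+3) * a * (ν (m+3))⁻¹
      = (((fun i => if i = 1 then 1 else ν (m+2), finRotate 3) : W (A (m+2))) : A (m+3)) ∧
    ν (m+3) * a * (ν (m+3))⁻¹ ∉ E (m+3) ∧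
    ¬ (E (m+3)).Normal := by
  intro a
  have ha : a ∈ E (m+3) := rootPerm_mem_E (by decide)
  have hconj : ν (m+3) * a * (ν (m+3))⁻¹
      = (((fun i => if i = 1 then 1 else ν (m+2), finRotate 3) : W (A (m+2))) : A (m+3)) :=
    ν_mul_rootPerm_finRotate_mul_ν_inv (m+1)
  have hnot : ν (m+3) * a * (ν (m+3))⁻¹ ∉ E (m+3) := fun h =>
    ν_not_mem_E m ((mem_E_succ_succ.mp (hconj ▸ h)).1 0)
  exact ⟨ha, hconj, hnot, fun hN => hnot (hN.conj_mem a ha (ν (m+3)))⟩
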